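/- arXiv:2604.10446 — 4 statements merged into one kernel-verified Lean document; each statement's English description precedes it below -/
import Mathlib

section
/- Let $X_1,\dots,X_n$ be negatively associated random variables taking values in $[0,1]$, and let $\lambda\geq 0$. Then $\mathbb{E}\, e^{\lambda \sum_{i=1}^n X_i} \leq \prod_{i=1}^n \mathbb{E}\, e^{\lambda X_i}$. -/
open MeasureTheory ProbabilityTheory

/-- Random variables `X₁, …, Xₙ` are negatively associated if for all disjoint index sets
`I, J` and all coordinate-wise non-decreasing functions `f, g`,
`𝔼[f((Xᵢ)_{i∈I}) g((Xⱼ)_{j∈J})] ≤ 𝔼[f((Xᵢ)_{i∈I})] 𝔼[g((Xⱼ)_{j∈J})]`. -/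
def NegAssoc {Ω : Type*} [MeasureSpace Ω] {n : ℕ} (X : Fin n → Ω → ℝ) : Prop :=
  ∀ I J : Finset (Fin n), Disjoint I J →
    ∀ f : (I → ℝ) → ℝ, ∀ g : (J → ℝ) → ℝ,
      (∀ x y : I → ℝ, (∀ i, x i ≤ y i) → f x ≤ f y) →
      (∀ x y : J → ℝ, (∀ j, x j ≤ y j) → g x ≤ g y) →
      ∫ ω, f (fun i => X i.1 ω) * g (fun j => X j.1 ω) ∂ℙ ≤
        (∫ ω, f (fun i => X i.1 ω) ∂ℙ) * ∫ ω, g (fun j => X j.1 ω) ∂ℙ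

lemma negAssoc_mgf_sum_le_aux
    {Ω : Type*} [MeasureSpace Ω] [IsProbabilityMeasure (ℙ : Measure Ω)]
    {n : ℕ} (X : Fin n → Ω → ℝ)
    (hNA : NegAssoc X) (lam : ℝ) (hlam : 0 ≤ lam) (s : Finset (Fin n)) :
    ∫ ω, Real.exp (lam * ∑ i ∈ s, X i ω) ∂ℙ ≤
      ∏ i ∈ s, ∫ ω, Real.exp (lam * X i ω) ∂ℙ := by
  induction s using Finset.cons_induction with
  | empty => simp
  | cons a t ha ih =>
    have hdisj : Disjoint t ({a} : Finset (Fin n)) := by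
      simpa [Finset.disjoint_singleton_right] using ha
    set f : (t → ℝ) → ℝ := fun x => Real.exp (lam * ∑ i, x i) with hf
    set g : (({a} : Finset (Fin n)) → ℝ) → ℝ :=
      fun y => Real.exp (lam * y ⟨a, Finset.mem_singleton_self a⟩) with hg
    have hfm : ∀ x y : t → ℝ, (∀ i, x i ≤ y i) → f x ≤ f y := by
      intro x y hxy
      exact Real.exp_le_exp.2 (mul_le_mul_of_nonneg_left
        (Finset.sum_le_sum fun i _ => hxy i) hlam)
    have hgm : ∀ x y : ({a} : Finset (Fin n)) → ℝ, (∀ j, x j ≤ y j) → g x ≤ g y := by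
      intro x y hxy
      exact Real.exp_le_exp.2 (mul_le_mul_of_nonneg_left (hxy _) hlam)
    have hNAfg := hNA t {a} hdisj f g hfm hgm
    have hfval : ∀ ω, f (fun i : t => X i.1 ω) = Real.exp (lam * ∑ i ∈ t, X i ω) := by
      intro ω
      simp [hf, Finset.sum_attach t (fun i => X i ω)]
    have hgval : ∀ ω, g (fun j : ({a} : Finset (Fin n)) => X j.1 ω)
        = Real.exp (lam * X a ω) := by
      intro ω; simp [hg]
    have hstep : ∫ ω, Real.exp (lam * ∑ i ∈ Finset.cons a t ha, X i ω) ∂ℙ ≤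
        (∫ ω, Real.exp (lam * ∑ i ∈ t, X i ω) ∂ℙ) * ∫ ω, Real.exp (lam * X a ω) ∂ℙ := by
      calc ∫ ω, Real.exp (lam * ∑ i ∈ Finset.cons a t ha, X i ω) ∂ℙ
          = ∫ ω, f (fun i : t => X i.1 ω) *
              g (fun j : ({a} : Finset (Fin n)) => X j.1 ω) ∂ℙ := by
            refine integral_congr_ae (Filter.Eventually.of_forall fun ω => ?_)
            simp only [hfval ω, hgval ω]
            rw [Finset.sum_cons, ← Real.exp_add, ← mul_add, add_comm]
        _ ≤ (∫ ω, f (fun i : t => X i.1 ω) ∂ℙ) *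
              ∫ ω, g (fun j : ({a} : Finset (Fin n)) => X j.1 ω) ∂ℙ := hNAfg
        _ = (∫ ω, Real.exp (lam * ∑ i ∈ t, X i ω) ∂ℙ) *
              ∫ ω, Real.exp (lam * X a ω) ∂ℙ := by
            simp only [hfval, hgval]
    have hga : 0 ≤ ∫ ω, Real.exp (lam * X a ω) ∂ℙ :=
      integral_nonneg fun ω => (Real.exp_pos _).le
    calc ∫ ω, Real.exp (lam * ∑ i ∈ Finset.cons a t ha, X i ω) ∂ℙ
        ≤ (∫ ω, Real.exp (lam * ∑ i ∈ t, X i ω) ∂ℙ) *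
            ∫ ω, Real.exp (lam * X a ω) ∂ℙ := hstep
      _ ≤ (∏ i ∈ t, ∫ ω, Real.exp (lam * X i ω) ∂ℙ) *
            ∫ ω, Real.exp (lam * X a ω) ∂ℙ := mul_le_mul_of_nonneg_right ih hga
      _ = ∏ i ∈ Finset.cons a t ha, ∫ ω, Real.exp (lam * X i ω) ∂ℙ := by
            rw [Finset.prod_cons]; ring

/-- For negatively associated random variables with values in `[0,1]` and `λ ≥ 0`,
the moment generating function of the sum is at most the product of the individual
moment generating functions. -/
theorem negAssoc_mgf_sum_le
    {Ω : Type*} [MeasureSpace Ω] [IsProbabilityMeasure (ℙ : Measure Ω)]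
    {n : ℕ} (X : Fin n → Ω → ℝ)
    (hmeas : ∀ i, Measurable (X i))
    (hrange : ∀ i ω, X i ω ∈ Set.Icc (0 : ℝ) 1)
    (hNA : NegAssoc X) (lam : ℝ) (hlam : 0 ≤ lam) :
    ∫ ω, Real.exp (lam * ∑ i, X i ω) ∂ℙ ≤
      ∏ i, ∫ ω, Real.exp (lam * X i ω) ∂ℙ := by
  simpa using negAssoc_mgf_sum_le_aux X hNA lam hlam Finset.univ
end

section
/- Let $1\leq d,k\leq n$, $r\geq 2$, let $J\subseteq[n]$ with $|J|=k$, and let $M$ be a random $n\times n$ matrix whose rows are independent and each uniform over binary vectors with exactly $d$ ones. Then with probability at least $1-\exp(-8n/r)$, the number of rows $i$ with $|\mathrm{Supp}(R_i(M))\cap J| \geq rkd/n$ is at most $9n/r$. -/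
/-!
Call a row heavy if it has at least `rkd/n` ones in `J`. By the symmetry of the columns, a
uniform vector of weight `d` has on average `kd/n` ones in `J`, so by Markov's inequality each
row is heavy with probability at most `1/r`. The rows are independent, so the Chernoff bound for
the number `N` of heavy rows with parameter `t = log 9` gives
`P(N ≥ 9n/r) ≤ exp(-9 log 9 · n/r + 8n/r) ≤ exp(-8n/r)`.
-/

open MeasureTheory ProbabilityTheory Finset Real
open scoped ENNReal

section Chernoff

lemma exp_mul_indicator_one {Ω : Type*} (A : Set Ω) (t : ℝ) (ω : Ω) :
    exp (t * A.indicator 1 ω) = 1 + A.indicator (fun _ => exp t - 1) ω := by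
  by_cases h : ω ∈ A <;> simp [h]

variable {ι Ω β : Type*} [MeasurableSpace Ω] {μ : Measure Ω}

lemma mgf_indicator_one [IsProbabilityMeasure μ] {A : Set Ω} (hA : MeasurableSet A) (t : ℝ) :
    mgf (A.indicator 1) μ t = 1 + (exp t - 1) * μ.real A := by
  simp only [mgf, exp_mul_indicator_one]
  rw [integral_add (integrable_const 1) ((integrable_const _).indicator hA),
    integral_indicator_const _ hA]
  simp [mul_comm]

lemma integrable_exp_mul_indicator_one [IsProbabilityMeasure μ] {A : Set Ω}
    (hA : MeasurableSet A) (t : ℝ) :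
    Integrable (fun ω => exp (t * A.indicator 1 ω)) μ := by
  simp only [exp_mul_indicator_one]
  exact (integrable_const 1).add ((integrable_const _).indicator hA)

variable [Fintype ι] [MeasurableSpace β]

theorem measureReal_card_filter_ge_le_exp {X : ι → Ω → β} (hX : ∀ i, Measurable (X i))
    (hind : iIndepFun X μ) {P : β → Prop} [DecidablePred P] (hP : MeasurableSet {b | P b})
    {p : ℝ} (hp : ∀ i, μ.real {ω | P (X i ω)} ≤ p) {t : ℝ} (ht : 0 ≤ t) (a : ℝ) :
    μ.real {ω | a ≤ #{i | P (X i ω)}} ≤ exp (-t * a + Fintype.card ι * ((exp t - 1) * p)) := by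
  have := hind.isProbabilityMeasure
  set Y : ι → Ω → ℝ := fun i => {ω | P (X i ω)}.indicator 1
  have hA i : MeasurableSet {ω | P (X i ω)} := hX i hP
  have hY i : Measurable (Y i) := measurable_const.indicator (hA i)
  have hindY : iIndepFun Y μ :=
    hind.comp (fun _ => {b | P b}.indicator 1) fun _ => measurable_const.indicator hP
  have hcount ω : (#{i | P (X i ω)} : ℝ) = (∑ i, Y i) ω := by
    simp [Y, Set.indicator_apply]
  have hmgf i : mgf (Y i) μ t ≤ exp ((exp t - 1) * p) := calc
    mgf (Y i) μ t = 1 + (exp t - 1) * μ.real {ω | P (X i ω)} := mgf_indicator_one (hA i) t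
    _ ≤ 1 + (exp t - 1) * p := by
      gcongr
      · linarith [add_one_le_exp t]
      · exact hp i
    _ ≤ exp ((exp t - 1) * p) := by linarith [add_one_le_exp ((exp t - 1) * p)]
  have hint : Integrable (fun ω => exp (t * (∑ i, Y i) ω)) μ :=
    hindY.integrable_exp_mul_sum hY fun i _ => integrable_exp_mul_indicator_one (hA i) t
  calc μ.real {ω | a ≤ #{i | P (X i ω)}} = μ.real {ω | a ≤ (∑ i, Y i) ω} := by
        simp_rw [hcount]
    _ ≤ exp (-t * a) * mgf (∑ i, Y i) μ t := measure_ge_le_exp_mul_mgf a ht hint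
    _ = exp (-t * a) * ∏ i, mgf (Y i) μ t := by rw [hindY.mgf_sum hY]
    _ ≤ exp (-t * a) * ∏ _i : ι, exp ((exp t - 1) * p) := by
        gcongr with i
        · exact fun i _ => mgf_nonneg
        · exact hmgf i
    _ = exp (-t * a + Fintype.card ι * ((exp t - 1) * p)) := by
        rw [prod_const, ← exp_nat_mul, ← exp_add, card_univ]

end Chernoff

section Uniform

variable {Ω β : Type*} [MeasurableSpace Ω] {μ : Measure Ω} [Fintype β] [DecidableEq β]
  [MeasurableSpace β] [MeasurableSingletonClass β]

lemma measure_setOf_eq_card_filter_div {X : Ω → β} (hX : Measurable X) {S : Finset β}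
    (hunif : ∀ v, μ {ω | X ω = v} = if v ∈ S then (#S : ℝ≥0∞)⁻¹ else 0)
    (P : β → Prop) [DecidablePred P] :
    μ {ω | P (X ω)} = #{v ∈ S | P v} / #S := by
  have hset : {ω | P (X ω)} = X ⁻¹' ↑({v | P v} : Finset β) := by ext; simp
  rw [hset, ← sum_measure_preimage_singleton _ fun v _ => hX (measurableSet_singleton v)]
  simp only [Set.preimage, Set.mem_singleton_iff, hunif, sum_ite_mem, sum_const, nsmul_eq_mul,
    div_eq_mul_inv]
  congr 3
  ext v; simp [and_comm]

end Uniform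

lemma card_filter_le_mul_le_sum {ι : Type*} (s : Finset ι) (f : ι → ℝ) (hf : ∀ x ∈ s, 0 ≤ f x)
    (c : ℝ) [DecidablePred fun x => c ≤ f x] : #{x ∈ s | c ≤ f x} * c ≤ ∑ x ∈ s, f x := by
  calc #{x ∈ s | c ≤ f x} * c ≤ ∑ x ∈ s with c ≤ f x, f x := by
        simpa using card_nsmul_le_sum _ f c fun x hx => (mem_filter.1 hx).2
    _ ≤ ∑ x ∈ s, f x := sum_le_sum_of_subset_of_nonneg (filter_subset _ _) fun x hx _ => hf x hx

section Weight

variable {α : Type*} [Fintype α] [DecidableEq α]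

variable (α) in
def boolVecsOfWeight (d : ℕ) : Finset (α → Bool) :=
  {v | #{j | v j = true} = d}

@[simp]
lemma mem_boolVecsOfWeight {d : ℕ} {v : α → Bool} :
    v ∈ boolVecsOfWeight α d ↔ #{j | v j = true} = d := by
  simp [boolVecsOfWeight]

lemma boolVecsOfWeight_card_filter_apply_eq (d : ℕ) (j j' : α) :
    #{v ∈ boolVecsOfWeight α d | v j = true} = #{v ∈ boolVecsOfWeight α d | v j' = true} := by
  have hweight (v : α → Bool) :
      #{i | v (Equiv.swap j j' i) = true} = #{i | v i = true} :=
    card_equiv (Equiv.swap j j') (by simp)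
  refine card_nbij' (· ∘ Equiv.swap j j') (· ∘ Equiv.swap j j') ?_ ?_ ?_ ?_ <;>
    intro v <;> simp [boolVecsOfWeight, hweight, Function.comp_def]

lemma boolVecsOfWeight_card_filter_apply_mul_card (d : ℕ) (j : α) :
    #{v ∈ boolVecsOfWeight α d | v j = true} * Fintype.card α = d * #(boolVecsOfWeight α d) :=
  calc #{v ∈ boolVecsOfWeight α d | v j = true} * Fintype.card α
      = ∑ j' : α, #{v ∈ boolVecsOfWeight α d | v j' = true} := by
        rw [sum_congr rfl fun j' _ => boolVecsOfWeight_card_filter_apply_eq d j' j,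
          sum_const, card_univ, smul_eq_mul, mul_comm]
    _ = ∑ v ∈ boolVecsOfWeight α d, #{j' | v j' = true} :=
        (sum_card_bipartiteAbove_eq_sum_card_bipartiteBelow _).symm
    _ = d * #(boolVecsOfWeight α d) := by
        rw [sum_const_nat fun v hv => mem_boolVecsOfWeight.1 hv, mul_comm]

lemma boolVecsOfWeight_sum_card_filter_mul_card (d : ℕ) (J : Finset α) :
    (∑ v ∈ boolVecsOfWeight α d, #{j ∈ J | v j = true}) * Fintype.card α =
      #J * d * #(boolVecsOfWeight α d) :=
  calc (∑ v ∈ boolVecsOfWeight α d, #{j ∈ J | v j = true}) * Fintype.card α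
      = ∑ j ∈ J, #{v ∈ boolVecsOfWeight α d | v j = true} * Fintype.card α := by
        rw [← sum_mul]
        exact congrArg (· * _) (sum_card_bipartiteAbove_eq_sum_card_bipartiteBelow _)
    _ = #J * d * #(boolVecsOfWeight α d) := by
        simp only [boolVecsOfWeight_card_filter_apply_mul_card, sum_const, smul_eq_mul, mul_assoc]

lemma card_filter_mul_le_card_boolVecsOfWeight {d : ℕ} (hd : 0 < d) {J : Finset α}
    (hJ : 0 < #J) (r : ℝ) :
    (#{v ∈ boolVecsOfWeight α d | r * #J * d / Fintype.card α ≤ #{j ∈ J | v j = true}} : ℝ) * r ≤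
      #(boolVecsOfWeight α d) := by
  have hα : (0 : ℝ) < Fintype.card α := by exact_mod_cast hJ.trans_le (card_le_univ J)
  set m : ℝ := #J * d / Fintype.card α
  have hm : 0 < m := by positivity
  have hsum : ∑ v ∈ boolVecsOfWeight α d, (#{j ∈ J | v j = true} : ℝ) =
      m * #(boolVecsOfWeight α d) := by
    rw [div_mul_eq_mul_div, eq_div_iff hα.ne']
    exact_mod_cast boolVecsOfWeight_sum_card_filter_mul_card d J
  have hmarkov := card_filter_le_mul_le_sum (boolVecsOfWeight α d)
    (fun v => (#{j ∈ J | v j = true} : ℝ)) (fun _ _ => Nat.cast_nonneg _) (r * m)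
  rw [hsum] at hmarkov
  rw [mul_assoc, mul_div_assoc]
  exact le_of_mul_le_mul_right (by linarith) hm

end Weight

theorem rows_with_many_ones_in_J_general
    {Ω : Type*} [MeasureSpace Ω]
    (n d k : ℕ) (hd1 : 1 ≤ d) (hk1 : 1 ≤ k)
    (r : ℝ) (hr : 2 ≤ r)
    (J : Finset (Fin n)) (hJ : J.card = k)
    (S : Finset (Fin n → Bool))
    (hS : S = Finset.univ.filter
      (fun v : Fin n → Bool => (Finset.univ.filter (fun j => v j = true)).card = d))
    (M : Fin n → Ω → (Fin n → Bool))
    (hmeas : ∀ i, Measurable (M i))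
    (hind : iIndepFun M ℙ)
    (hunif : ∀ i, ∀ v : Fin n → Bool,
      ℙ {ω | M i ω = v} = if v ∈ S then ((S.card : ℝ≥0∞))⁻¹ else 0) :
    ℙ {ω | (9 * n / r : ℝ) <
        ((Finset.univ.filter (fun i : Fin n =>
          (r * k * d / n : ℝ) ≤
            ((J.filter (fun j => M i ω j = true)).card : ℝ))).card : ℝ)} ≤
      ENNReal.ofReal (Real.exp (-(8 * n / r))) := by
  replace hS : S = boolVecsOfWeight (Fin n) d := hS
  subst hS hJ
  have := hind.isProbabilityMeasure
  have hr0 : 0 < r := by linarith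
  set P : (Fin n → Bool) → Prop := fun v => r * #J * d / n ≤ (#{j ∈ J | v j = true} : ℝ)
  have hrow i : volume.real {ω | P (M i ω)} ≤ 1 / r := by
    rw [measureReal_def, measure_setOf_eq_card_filter_div (hmeas i) (hunif i), ENNReal.toReal_div]
    simp only [ENNReal.toReal_natCast]
    refine div_le_of_le_mul₀ (Nat.cast_nonneg _) (by positivity) ?_
    rw [div_mul_eq_mul_div, le_div_iff₀ hr0, one_mul]
    simpa using card_filter_mul_le_card_boolVecsOfWeight hd1 hk1 r
  have hchernoff := measureReal_card_filter_ge_le_exp hmeas hind (Set.toFinite _).measurableSet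
    hrow (log_nonneg (by norm_num : (1 : ℝ) ≤ 9)) (9 * n / r)
  have hexponent : -log 9 * (9 * n / r) + Fintype.card (Fin n) * ((exp (log 9) - 1) * (1 / r))
      ≤ -(8 * n / r) := by
    have hlog : 2 ≤ log 9 := by
      rw [le_log_iff_exp_le (by norm_num), show (2 : ℝ) = 1 + 1 by norm_num, exp_add]
      nlinarith [exp_one_lt_three, exp_pos 1]
    rw [exp_log (by norm_num), Fintype.card_fin,
      show -log 9 * (9 * n / r) + n * ((9 - 1) * (1 / r)) = -(8 * n / r) - n / r * (9 * log 9 - 16)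
        by ring]
    linarith [mul_nonneg (by positivity : (0 : ℝ) ≤ n / r) (by linarith : 0 ≤ 9 * log 9 - 16)]
  calc ℙ {ω | (9 * n / r : ℝ) < #{i | P (M i ω)}}
      ≤ ℙ {ω | (9 * n / r : ℝ) ≤ #{i | P (M i ω)}} :=
        measure_mono (Set.ofPred_subset_ofPred.2 fun _ => le_of_lt)
    _ = ENNReal.ofReal (volume.real {ω | (9 * n / r : ℝ) ≤ #{i | P (M i ω)}}) :=
      (ofReal_measureReal (measure_ne_top _ _)).symm
    _ ≤ ENNReal.ofReal (exp (-(8 * n / r))) :=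
      ENNReal.ofReal_le_ofReal (hchernoff.trans (exp_le_exp.2 hexponent))

/-- For a random matrix whose rows are independent and uniform over binary vectors with
exactly `d` ones, with probability at least `1 - exp(-8n/r)` at most `9n/r` rows have at
least `rkd/n` ones within a fixed set `J` of `k` columns. -/
theorem rows_with_many_ones_in_J
    {Ω : Type*} [MeasureSpace Ω] [IsProbabilityMeasure (ℙ : Measure Ω)]
    (n d k : ℕ) (hd1 : 1 ≤ d) (hdn : d ≤ n) (hk1 : 1 ≤ k) (hkn : k ≤ n)
    (r : ℝ) (hr : 2 ≤ r)
    (J : Finset (Fin n)) (hJ : J.card = k)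
    (S : Finset (Fin n → Bool))
    (hS : S = Finset.univ.filter
      (fun v : Fin n → Bool => (Finset.univ.filter (fun j => v j = true)).card = d))
    (M : Fin n → Ω → (Fin n → Bool))
    (hmeas : ∀ i, Measurable (M i))
    (hind : iIndepFun M ℙ)
    (hunif : ∀ i, ∀ v : Fin n → Bool,
      ℙ {ω | M i ω = v} = if v ∈ S then ((S.card : ℝ≥0∞))⁻¹ else 0) :
    ℙ {ω | (9 * n / r : ℝ) <
        ((Finset.univ.filter (fun i : Fin n =>
          (r * k * d / n : ℝ) ≤
            ((J.filter (fun j => M i ω j = true)).card : ℝ))).card : ℝ)} ≤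
      ENNReal.ofReal (Real.exp (-(8 * n / r))) :=
  rows_with_many_ones_in_J_general n d k hd1 hk1 r hr J hJ S hS M hmeas hind hunif
end

section
/- Let $1\leq k\leq n$ and let $A'$ be a $k\times n$ complex matrix of rank $k$ with rows $R_1,\dots,R_k$ and singular values $s_1\geq\cdots\geq s_k>0$. For each $i$, let $W_i$ be the subspace spanned by the rows other than $R_i$. Then $\sum_{i=1}^k s_i^{-2} = \sum_{i=1}^k \mathrm{dist}(R_i,W_i)^{-2}$. -/
open scoped ComplexOrder

/-!
The numbers `s_i ^ 2` are the eigenvalues of `A Aᴴ`, so the left-hand side is `tr (A Aᴴ)⁻¹`, and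
`A Aᴴ` is the (transposed) Gram matrix `G` of the rows `v_i`, invertible since they are
independent. Let `w = v_i - P_{W_i} v_i` be the component of `v_i` orthogonal to `W_i`. It is a
combination `∑ c_j v_j` with `c_i = 1`, and `⟪v_j, w⟫ = δ_{ij} ‖w‖²`, i.e. `G c = ‖w‖² e_i`.
Reading off the `i`-th coordinate of `c = ‖w‖² G⁻¹ e_i` gives
`(G⁻¹)_{ii} = ‖w‖⁻² = dist(v_i, W_i)⁻²`.
-/

open Matrix Submodule

namespace Submodule

variable {𝕜 E : Type*} [RCLike 𝕜] [NormedAddCommGroup E] [InnerProductSpace 𝕜 E]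
  (U : Submodule 𝕜 E) [U.HasOrthogonalProjection]

theorem infDist_eq_norm_sub_starProjection (x : E) :
    Metric.infDist x U = ‖x - U.starProjection x‖ := by
  rw [Metric.infDist_eq_iInf, starProjection_minimal]
  simp_rw [dist_eq_norm]
  rfl

theorem inner_sub_starProjection_eq_norm_sq (x : E) :
    inner 𝕜 x (x - U.starProjection x) = (‖x - U.starProjection x‖ : 𝕜) ^ 2 := by
  nth_rewrite 1 [← sub_add_cancel x (U.starProjection x)]
  rw [inner_add_left, inner_self_eq_norm_sq_to_K,
    inner_eq_zero_symm.mp (U.starProjection_inner_eq_zero x _ (U.starProjection_apply_mem x)),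
    add_zero]

end Submodule

theorem exists_sum_smul_eq_sub_of_mem_span_image_ne {R M ι : Type*} [Ring R] [AddCommGroup M]
    [Module R M] [Fintype ι] [DecidableEq ι] {v : ι → M} {i : ι} {p : M}
    (hp : p ∈ span R (v '' {j | j ≠ i})) : ∃ c : ι → R, c i = 1 ∧ ∑ j, c j • v j = v i - p := by
  obtain ⟨l, hl, rfl⟩ := (Finsupp.mem_span_image_iff_linearCombination R).mp hp
  refine ⟨Pi.single i 1 - ⇑l, ?_, ?_⟩
  · simpa using (Finsupp.mem_supported' R l).mp hl i (by simp)
  · simp [sub_smul, Finset.sum_sub_distrib, Finsupp.linearCombination_apply, Finsupp.sum_fintype]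

namespace Matrix

section Gram

variable {𝕜 E ι : Type*} [RCLike 𝕜] [NormedAddCommGroup E] [InnerProductSpace 𝕜 E] [Fintype ι]

theorem gram_mulVec_apply (v : ι → E) (c : ι → 𝕜) (j : ι) :
    (gram 𝕜 v *ᵥ c) j = inner 𝕜 (v j) (∑ m, c m • v m) := by
  simp [mulVec, dotProduct, gram_apply, inner_sum, inner_smul_right, mul_comm]

variable [DecidableEq ι]

theorem inv_gram_apply_self {v : ι → E} (hv : LinearIndependent 𝕜 v) (i : ι) :
    (gram 𝕜 v)⁻¹ i i = ((Metric.infDist (v i) (span 𝕜 (v '' {j | j ≠ i})) : 𝕜) ^ 2)⁻¹ := by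
  set W := span 𝕜 (v '' {j | j ≠ i})
  have : FiniteDimensional 𝕜 W := .span_of_finite 𝕜 (Set.toFinite _)
  set w := v i - W.starProjection (v i)
  obtain ⟨c, hci, hc⟩ :=
    exists_sum_smul_eq_sub_of_mem_span_image_ne (W.starProjection_apply_mem (v i))
  have hGc : gram 𝕜 v *ᵥ c = Pi.single i ((‖w‖ : 𝕜) ^ 2) := by
    funext j
    rw [gram_mulVec_apply, hc]
    rcases eq_or_ne j i with rfl | hj
    · rw [W.inner_sub_starProjection_eq_norm_sq, Pi.single_eq_same]
    · rw [Pi.single_eq_of_ne hj, inner_eq_zero_symm]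
      exact W.starProjection_inner_eq_zero _ _ (subset_span ⟨j, hj, rfl⟩)
  have hG : IsUnit (gram 𝕜 v).det :=
    isUnit_iff_ne_zero.mpr (det_gram_ne_zero_iff_linearIndependent.mpr hv)
  have hc_eq : c = (gram 𝕜 v)⁻¹ *ᵥ Pi.single i ((‖w‖ : 𝕜) ^ 2) := by
    rw [← hGc, mulVec_mulVec, nonsing_inv_mul _ hG, one_mulVec]
  have hci' : 1 = (gram 𝕜 v)⁻¹ i i * (‖w‖ : 𝕜) ^ 2 := by
    simpa [mulVec_single, hci] using congrFun hc_eq i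
  rw [W.infDist_eq_norm_sub_starProjection]
  exact eq_inv_of_mul_eq_one_left hci'.symm

theorem trace_inv_gram {v : ι → E} (hv : LinearIndependent 𝕜 v) :
    (gram 𝕜 v)⁻¹.trace = ∑ i, ((Metric.infDist (v i) (span 𝕜 (v '' {j | j ≠ i})) : 𝕜) ^ 2)⁻¹ :=
  Finset.sum_congr rfl fun i _ => inv_gram_apply_self hv i

end Gram

theorem linearIndependent_row_iff_rank_eq_card {R m n : Type*} [Field R] [Fintype m]
    [Fintype n] {M : Matrix m n R} : LinearIndependent R M.row ↔ M.rank = Fintype.card m := by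
  rw [linearIndependent_iff_card_eq_finrank_span, Set.finrank, ← rank_eq_finrank_span_row, eq_comm]

theorem mul_conjTranspose_eq_transpose_gram {𝕜 m n : Type*} [RCLike 𝕜] [Fintype n]
    (A : Matrix m n 𝕜) :
    A * Aᴴ = (gram 𝕜 fun i => (EuclideanSpace.equiv n 𝕜).symm (A i))ᵀ := by
  ext i j
  simp [mul_apply, gram_apply, PiLp.inner_apply]

theorem IsHermitian.trace_inv {𝕜 n : Type*} [RCLike 𝕜] [Fintype n] [DecidableEq n]
    {A : Matrix n n 𝕜} (hA : A.IsHermitian) (hdet : IsUnit A.det) :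
    A⁻¹.trace = ∑ i, (hA.eigenvalues i : 𝕜)⁻¹ := by
  set U : Matrix n n 𝕜 := (hA.eigenvectorUnitary : Matrix n n 𝕜)
  have hU : star U * U = 1 := Unitary.coe_star_mul_self _
  have hd : ∀ i, (hA.eigenvalues i : 𝕜) ≠ 0 := by
    rw [hA.det_eq_prod_eigenvalues, isUnit_iff_ne_zero, Finset.prod_ne_zero_iff] at hdet
    exact fun i => hdet i (Finset.mem_univ i)
  have hinv : A⁻¹ = U * diagonal (fun i => (hA.eigenvalues i : 𝕜)⁻¹) * star U := by
    refine inv_eq_right_inv ?_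
    have hspec : A = U * diagonal (RCLike.ofReal ∘ hA.eigenvalues) * star U := by
      simpa using hA.spectral_theorem
    have hD : diagonal (RCLike.ofReal ∘ hA.eigenvalues) *
        diagonal (fun i => (hA.eigenvalues i : 𝕜)⁻¹) = 1 := by
      rw [diagonal_mul_diagonal, ← diagonal_one]
      exact congrArg diagonal (funext fun i => mul_inv_cancel₀ (hd i))
    nth_rewrite 1 [hspec]
    simp only [Matrix.mul_assoc]
    rw [← Matrix.mul_assoc (star U), hU, Matrix.one_mul, ← Matrix.mul_assoc (diagonal _), hD,
      Matrix.one_mul]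
    exact Unitary.coe_mul_star_self _
  rw [hinv, trace_mul_cycle, hU, Matrix.one_mul, trace_diagonal]

end Matrix

theorem negative_second_moment_general
    (k n : ℕ)
    (A : Matrix (Fin k) (Fin n) ℂ) (hrank : A.rank = k)
    (hH : (A * A.conjTranspose).IsHermitian) :
    ∑ i, (hH.eigenvalues i)⁻¹ =
      ∑ i, ((Metric.infDist ((EuclideanSpace.equiv (Fin n) ℂ).symm (A i))
          ((Submodule.span ℂ
            ((fun l : Fin k => (EuclideanSpace.equiv (Fin n) ℂ).symm (A l)) ''
              {l | l ≠ i}) : Submodule ℂ (EuclideanSpace ℂ (Fin n))) : Set (EuclideanSpace ℂ (Fin n)))) ^ 2)⁻¹ := by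
  have hrow : LinearIndependent ℂ A.row :=
    linearIndependent_row_iff_rank_eq_card.mpr (by simpa using hrank)
  have hr : LinearIndependent ℂ fun l => (EuclideanSpace.equiv (Fin n) ℂ).symm (A l) :=
    hrow.map' (EuclideanSpace.equiv (Fin n) ℂ).symm.toLinearMap
      (EuclideanSpace.equiv (Fin n) ℂ).symm.ker
  have hdet : IsUnit (A * Aᴴ).det := by
    rw [mul_conjTranspose_eq_transpose_gram, det_transpose]
    exact isUnit_iff_ne_zero.mpr (det_gram_ne_zero_iff_linearIndependent.mpr hr)
  apply Complex.ofReal_injective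
  push_cast
  calc ∑ i, (hH.eigenvalues i : ℂ)⁻¹ = (A * Aᴴ)⁻¹.trace := (hH.trace_inv hdet).symm
    _ = (gram ℂ fun l => (EuclideanSpace.equiv (Fin n) ℂ).symm (A l))⁻¹.trace := by
      rw [mul_conjTranspose_eq_transpose_gram, ← transpose_nonsing_inv, trace_transpose]
    _ = _ := trace_inv_gram hr

/-- Negative second moment identity: for a `k × n` complex matrix of full rank `k`, the sum
of the inverse squared singular values (the inverse eigenvalues of `A'A'ᴴ`) equals the sum
of the inverse squared distances from each row to the span of the remaining rows. -/
theorem negative_second_moment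
    (k n : ℕ) (hk : 1 ≤ k) (hkn : k ≤ n)
    (A : Matrix (Fin k) (Fin n) ℂ) (hrank : A.rank = k)
    (hH : (A * A.conjTranspose).IsHermitian) :
    ∑ i, (hH.eigenvalues i)⁻¹ =
      ∑ i, ((Metric.infDist ((EuclideanSpace.equiv (Fin n) ℂ).symm (A i))
          ((Submodule.span ℂ
            ((fun l : Fin k => (EuclideanSpace.equiv (Fin n) ℂ).symm (A l)) ''
              {l | l ≠ i}) : Submodule ℂ (EuclideanSpace ℂ (Fin n))) : Set (EuclideanSpace ℂ (Fin n)))) ^ 2)⁻¹ :=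
  negative_second_moment_general k n A hrank hH
end

section
/- Let $M$ be an $n\times n$ random matrix whose rows are independent and each uniform over binary vectors with exactly $d$ ones, $1\leq d\leq n/2$, and let $X$ denote the number of zero columns of $M$. Then $\mathbb{E}X^2 \leq q + \frac{n-1}{n}q^2$, where $q=n(1-d/n)^n=\mathbb{E}X$. -/
/-!
Expanding the square, `X² = ∑_{j,k} 1[columns j and k of M vanish]`. A row avoids a fixed set of
`t` columns with probability `C(n-t,d)/C(n,d) = ∏_{i<t} (1 - d/(n-i)) ≤ (1-d/n)^t`, and by
independence the `n` rows do so with probability at most `(1-d/n)^(tn)`. The `n` diagonal terms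
(`t = 1`) contribute at most `q`, the `n(n-1)` off-diagonal ones (`t = 2`) at most
`n(n-1)(1-d/n)^(2n) = (n-1)/n · q²`.
-/

open MeasureTheory ProbabilityTheory Finset
open scoped ENNReal

lemma card_forall_false_inter_card_true_eq {α : Type*} [Fintype α] [DecidableEq α]
    (T : Finset α) (d : ℕ) :
    #(({v | ∀ j ∈ T, v j = false} : Finset (α → Bool)) ∩
        ({v | #{j | v j = true} = d} : Finset (α → Bool))) =
      (Fintype.card α - #T).choose d := by
  rw [← filter_and, ← card_compl, ← card_powersetCard]
  refine card_bij' (fun v _ => ({j | v j = true} : Finset α)) (fun s _ j => decide (j ∈ s))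
    ?_ ?_ ?_ ?_
  · intro v hv
    simp only [mem_filter, mem_univ, true_and] at hv
    refine mem_powersetCard.2 ⟨fun j hj => mem_compl.2 fun hjT => ?_, hv.2⟩
    simp [hv.1 j hjT] at hj
  · intro s hs
    obtain ⟨hsT, hsd⟩ := mem_powersetCard.1 hs
    simp only [mem_filter, mem_univ, true_and, decide_eq_true_eq, filter_mem_eq_inter,
      univ_inter, hsd, decide_eq_false_iff_not, and_true]
    exact fun j hjT hjs => mem_compl.1 (hsT hjs) hjT
  · intro v _
    funext j
    cases h : v j <;> simp [h]
  · intro s _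
    ext j
    simp

lemma choose_le_choose_succ_mul {m n d : ℕ} (hm : m + 1 ≤ n) (hdn : d ≤ n) :
    (m.choose d : ℝ) ≤ (m + 1).choose d * (1 - d / n) := by
  have hn : (0 : ℝ) < n := by exact_mod_cast (by omega : 0 < n)
  have key : (m.choose d : ℝ) * (m + 1) = (m + 1).choose d * ((m + 1 - d : ℕ) : ℝ) := by
    exact_mod_cast Nat.choose_mul_succ_eq m d
  have hfrac : ((m + 1 - d : ℕ) : ℝ) / (m + 1) ≤ 1 - d / n := by
    rcases le_or_gt d (m + 1) with hd | hd
    · rw [Nat.cast_sub hd, Nat.cast_add_one, sub_div, div_self (by positivity)]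
      gcongr
      exact_mod_cast hm
    · rw [Nat.sub_eq_zero_of_le hd.le, Nat.cast_zero, zero_div, sub_nonneg]
      exact div_le_one_of_le₀ (by exact_mod_cast hdn) hn.le
  calc (m.choose d : ℝ) = (m + 1).choose d * (((m + 1 - d : ℕ) : ℝ) / (m + 1)) := by
        rw [mul_div_assoc', eq_div_iff (by positivity), key]
    _ ≤ (m + 1).choose d * (1 - d / n) := by gcongr

lemma choose_sub_le_choose_mul_pow {n d t : ℕ} (hdn : d ≤ n) (htn : t ≤ n) :
    ((n - t).choose d : ℝ) ≤ n.choose d * (1 - d / n) ^ t := by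
  induction t with
  | zero => simp
  | succ t ih =>
    calc ((n - (t + 1)).choose d : ℝ) ≤ (n - (t + 1) + 1).choose d * (1 - d / n) :=
          choose_le_choose_succ_mul (by omega) hdn
      _ = (n - t).choose d * (1 - d / n) := by rw [show n - (t + 1) + 1 = n - t by omega]
      _ ≤ n.choose d * (1 - d / n) ^ t * (1 - d / n) := by
          have : 0 ≤ 1 - (d : ℝ) / n :=
            sub_nonneg.2 (div_le_one_of_le₀ (by exact_mod_cast hdn) (Nat.cast_nonneg n))
          gcongr
          exact ih (by omega)
      _ = n.choose d * (1 - d / n) ^ (t + 1) := by ring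

lemma sum_sum_pow_card_pair {ι : Type*} [Fintype ι] [DecidableEq ι] (x : ℝ) :
    ∑ j : ι, ∑ k : ι, x ^ #{j, k} =
      Fintype.card ι * x + Fintype.card ι * (Fintype.card ι - 1) * x ^ 2 := by
  have hrow (j : ι) : ∑ k : ι, x ^ #{j, k} = x + (Fintype.card ι - 1) * x ^ 2 := by
    have hterm (k : ι) : x ^ #{j, k} = x ^ 2 + if j = k then x - x ^ 2 else 0 := by
      by_cases hjk : j = k
      · simp [hjk]
      · simp [hjk, card_pair hjk]
    simp only [hterm, sum_add_distrib, sum_const, card_univ, sum_ite_eq, mem_univ, if_true,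
      nsmul_eq_mul]
    ring
  simp only [hrow, sum_const, card_univ, nsmul_eq_mul]
  ring

lemma integral_card_sq_eq_sum_measureReal {Ω ι : Type*} [MeasurableSpace Ω] [Fintype ι]
    {μ : Measure Ω} [IsFiniteMeasure μ] {P : Ω → ι → Prop} [∀ ω, DecidablePred (P ω)]
    (hP : ∀ j, MeasurableSet {ω | P ω j}) :
    ∫ ω, (#{j | P ω j} : ℝ) ^ 2 ∂μ = ∑ j, ∑ k, μ.real {ω | P ω j ∧ P ω k} := by
  have hsq (ω : Ω) :
      (#{j | P ω j} : ℝ) ^ 2 = ∑ j, ∑ k, {ω | P ω j ∧ P ω k}.indicator 1 ω := by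
    simp only [card_filter, Nat.cast_sum, sq, sum_mul_sum, Set.ofPred_and,
      Set.inter_indicator_one]
    simp [Set.indicator_apply]
  have hint (j k : ι) : Integrable ({ω | P ω j ∧ P ω k}.indicator (1 : Ω → ℝ)) μ :=
    (integrable_const 1).indicator ((hP j).inter (hP k))
  simp_rw [hsq]
  rw [integral_finsetSum _ fun j _ => integrable_finsetSum _ fun k _ => hint j k]
  refine sum_congr rfl fun j _ => ?_
  rw [integral_finsetSum _ fun k _ => hint j k]
  exact sum_congr rfl fun k _ => integral_indicator_one ((hP j).inter (hP k))

lemma measure_preimage_finset_of_uniform {Ω α : Type*} [MeasurableSpace Ω] [MeasurableSpace α]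
    [MeasurableSingletonClass α] [DecidableEq α] {μ : Measure Ω} {f : Ω → α}
    (hf : Measurable f)
    {S : Finset α} (hunif : ∀ v, μ {ω | f ω = v} = if v ∈ S then (#S : ℝ≥0∞)⁻¹ else 0)
    (B : Finset α) :
    μ (f ⁻¹' B) = #(B ∩ S) * (#S : ℝ≥0∞)⁻¹ := by
  rw [← sum_measure_preimage_singleton B fun v _ => hf (measurableSet_singleton v)]
  simp only [Set.preimage, Set.mem_singleton_iff, hunif, sum_ite_mem, sum_const, nsmul_eq_mul]

lemma measureReal_iInter_preimage_eq_pow_of_uniform {Ω ι α : Type*} [MeasurableSpace Ω]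
    [Fintype ι] [MeasurableSpace α] [MeasurableSingletonClass α] [DecidableEq α]
    {μ : Measure Ω} {M : ι → Ω → α} (hmeas : ∀ i, Measurable (M i)) (hind : iIndepFun M μ)
    {S : Finset α} (hunif : ∀ i v, μ {ω | M i ω = v} = if v ∈ S then (#S : ℝ≥0∞)⁻¹ else 0)
    (B : Finset α) :
    μ.real (⋂ i, M i ⁻¹' B) = ((#(B ∩ S) : ℝ) / #S) ^ Fintype.card ι := by
  rw [measureReal_def, hind.meas_iInter fun i => ⟨B, B.measurableSet, rfl⟩]
  simp only [measure_preimage_finset_of_uniform (hmeas _) (hunif _), prod_const, card_univ,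
    ENNReal.toReal_pow, ENNReal.toReal_mul, ENNReal.toReal_inv, ENNReal.toReal_natCast,
    div_eq_mul_inv]

lemma measureReal_iInter_preimage_forall_false_le {Ω ι α : Type*} [MeasurableSpace Ω]
    [Fintype ι] [Fintype α] [DecidableEq α] {μ : Measure Ω} {d : ℕ} (hd : d ≤ Fintype.card α)
    {M : ι → Ω → α → Bool} (hmeas : ∀ i, Measurable (M i)) (hind : iIndepFun M μ)
    {S : Finset (α → Bool)} (hS : S = ({v | #{j | v j = true} = d} : Finset (α → Bool)))
    (hunif : ∀ i v, μ {ω | M i ω = v} = if v ∈ S then (#S : ℝ≥0∞)⁻¹ else 0)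
    (T : Finset α) :
    μ.real (⋂ i, M i ⁻¹' {v | ∀ j ∈ T, v j = false}) ≤
      ((1 - d / Fintype.card α) ^ #T) ^ Fintype.card ι := by
  have hcount (T : Finset α) :
      #(({v | ∀ j ∈ T, v j = false} : Finset (α → Bool)) ∩ S) =
        (Fintype.card α - #T).choose d := by
    rw [hS, card_forall_false_inter_card_true_eq]
  have hScard : #S = (Fintype.card α).choose d := by simpa using hcount ∅
  have hchoose : (0 : ℝ) < (Fintype.card α).choose d := Nat.cast_pos.2 (Nat.choose_pos hd)
  rw [← coe_filter_univ, measureReal_iInter_preimage_eq_pow_of_uniform hmeas hind hunif, hcount,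
    hScard]
  gcongr
  rw [div_le_iff₀ hchoose, mul_comm]
  exact choose_sub_le_choose_mul_pow hd (card_le_univ T)

theorem second_moment_zero_columns_general
    {Ω : Type*} [MeasureSpace Ω] [IsProbabilityMeasure (ℙ : Measure Ω)]
    (n d : ℕ) (hdn : 2 * d ≤ n)
    (S : Finset (Fin n → Bool))
    (hS : S = Finset.univ.filter
      (fun v : Fin n → Bool => (Finset.univ.filter (fun j => v j = true)).card = d))
    (M : Fin n → Ω → (Fin n → Bool))
    (hmeas : ∀ i, Measurable (M i))
    (hind : iIndepFun M ℙ)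
    (hunif : ∀ i, ∀ v : Fin n → Bool,
      ℙ {ω | M i ω = v} = if v ∈ S then ((S.card : ℝ≥0∞))⁻¹ else 0)
    (q : ℝ) (hq : q = n * (1 - (d : ℝ) / n) ^ n) :
    ∫ ω, (((Finset.univ.filter
        (fun j : Fin n => ∀ i, M i ω j = false)).card : ℝ)) ^ 2 ∂ℙ ≤
      q + ((n : ℝ) - 1) / n * q ^ 2 := by
  subst hS
  have hpair (j k : Fin n) :
      (ℙ : Measure Ω).real {ω | (∀ i, M i ω j = false) ∧ ∀ i, M i ω k = false} ≤
        ((1 - d / n) ^ n) ^ #{j, k} := by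
    have hinter : {ω | (∀ i, M i ω j = false) ∧ ∀ i, M i ω k = false} =
        ⋂ i, M i ⁻¹' {v | ∀ l ∈ ({j, k} : Finset (Fin n)), v l = false} := by
      ext ω
      simp [forall_and]
    rw [hinter, pow_right_comm]
    simpa using
      measureReal_iInter_preimage_forall_false_le (by simp; omega) hmeas hind rfl hunif {j, k}
  calc ∫ ω, (#{j | ∀ i, M i ω j = false} : ℝ) ^ 2 ∂ℙ
      = ∑ j, ∑ k, (ℙ : Measure Ω).real {ω | (∀ i, M i ω j = false) ∧ ∀ i, M i ω k = false} :=
        integral_card_sq_eq_sum_measureReal fun j => by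
          simp only [Set.ofPred_forall]
          exact .iInter fun i => hmeas i (.of_discrete (s := {v : Fin n → Bool | v j = false}))
    _ ≤ ∑ j : Fin n, ∑ k : Fin n, ((1 - (d : ℝ) / n) ^ n) ^ #{j, k} := by
        gcongr with j _ k _
        exact hpair j k
    _ = q + ((n : ℝ) - 1) / n * q ^ 2 := by
        rw [sum_sum_pow_card_pair, Fintype.card_fin, hq]
        rcases eq_or_ne n 0 with rfl | hn
        · simp
        · field_simp

/-- Second moment bound for the number `X` of zero columns of a random `n × n` matrix whose
rows are independent and uniform over binary vectors with exactly `d` ones: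
`𝔼X² ≤ q + ((n-1)/n) q²` where `q = n(1-d/n)ⁿ = 𝔼X`. -/
theorem second_moment_zero_columns
    {Ω : Type*} [MeasureSpace Ω] [IsProbabilityMeasure (ℙ : Measure Ω)]
    (n d : ℕ) (hd1 : 1 ≤ d) (hdn : 2 * d ≤ n)
    (S : Finset (Fin n → Bool))
    (hS : S = Finset.univ.filter
      (fun v : Fin n → Bool => (Finset.univ.filter (fun j => v j = true)).card = d))
    (M : Fin n → Ω → (Fin n → Bool))
    (hmeas : ∀ i, Measurable (M i))
    (hind : iIndepFun M ℙ)
    (hunif : ∀ i, ∀ v : Fin n → Bool,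
      ℙ {ω | M i ω = v} = if v ∈ S then ((S.card : ℝ≥0∞))⁻¹ else 0)
    (q : ℝ) (hq : q = n * (1 - (d : ℝ) / n) ^ n) :
    ∫ ω, (((Finset.univ.filter
        (fun j : Fin n => ∀ i, M i ω j = false)).card : ℝ)) ^ 2 ∂ℙ ≤
      q + ((n : ℝ) - 1) / n * q ^ 2 :=
  second_moment_zero_columns_general n d hdn S hS M hmeas hind hunif q hq
end
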